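/- Cluster Lemma: Let φ : P → Q be an order-preserving map of posets, and suppose that for each q ∈ Q the subposet φ^{-1}(q) carries an acyclic matching M_q. Then the union ⊔_{q ∈ Q} M_q is an acyclic matching on P. -/

import Mathlib

/-- A partial matching on a poset `P`: a set of pairs `(a,b)` with `b` covering
`a`, each element of `P` belonging to at most one pair. -/
def IsMatching {P : Type*} [PartialOrder P] (M : Set (P × P)) : Prop :=
  (∀ p ∈ M, p.1 ⋖ p.2) ∧
  (∀ p ∈ M, ∀ q ∈ M,
    (p.1 = q.1 ∨ p.1 = q.2 ∨ p.2 = q.1 ∨ p.2 = q.2) → p = q)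

/-- An alternating cycle `a₁ ≺ u(a₁) ≻ a₂ ≺ u(a₂) ≻ ⋯ ≺ u(a_m) ≻ a₁` with
`m ≥ 2` and the `aᵢ` distinct. -/
def HasCycle {P : Type*} [PartialOrder P] (M : Set (P × P)) : Prop :=
  ∃ m : ℕ, ∃ a b : Fin (m + 2) → P,
    Function.Injective a ∧ (∀ i, (a i, b i) ∈ M) ∧ ∀ i, a (i + 1) ⋖ b i

/-!
Along a cycle `a₁ ≺ u(a₁) ≻ a₂ ≺ ⋯ ≻ a₁` of the union, each pair lies in a single fiber, so
`φ(a_{i+1}) ≤ φ(u(a_i)) = φ(a_i)`; a non-increasing sequence that returns to its start is constant,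
so the whole cycle lies in one fiber, contradicting acyclicity of that fiber's matching.
-/

theorem Fin.apply_eq_apply_zero_of_apply_add_one_le {α : Type*} [PartialOrder α] {n : ℕ}
    {f : Fin (n + 1) → α} (hf : ∀ i, f (i + 1) ≤ f i) (i : Fin (n + 1)) : f i = f 0 := by
  apply le_antisymm
  · induction i using Fin.induction with
    | zero => rfl
    | succ j ih => exact (Fin.coeSucc_eq_succ (a := j) ▸ hf j.castSucc).trans ih
  · induction i using Fin.reverseInduction with
    | last => exact Fin.last_add_one n ▸ hf (Fin.last n)
    | cast j ih => exact ih.trans (Fin.coeSucc_eq_succ (a := j) ▸ hf j.castSucc)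

section Fibers

variable {P Q : Type*} [PartialOrder P] {φ : P → Q} {M : Q → Set (P × P)}

theorem isMatching_iUnion_of_mem_fiber (hfiber : ∀ q, ∀ p ∈ M q, φ p.1 = q ∧ φ p.2 = q)
    (hmatch : ∀ q, IsMatching (M q)) : IsMatching (⋃ q, M q) := by
  simp only [IsMatching, Set.mem_iUnion, forall_exists_index]
  refine ⟨fun p q hp => (hmatch q).1 p hp, fun p q hp r q' hr hshare => ?_⟩
  obtain ⟨hp₁, hp₂⟩ := hfiber q p hp
  obtain ⟨hr₁, hr₂⟩ := hfiber q' r hr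
  obtain rfl : q = q' := by
    rcases hshare with h | h | h | h
    · rw [← hp₁, ← hr₁, h]
    · rw [← hp₁, ← hr₂, h]
    · rw [← hp₂, ← hr₁, h]
    · rw [← hp₂, ← hr₂, h]
  exact (hmatch q).2 p hp r hr hshare

theorem exists_hasCycle_of_hasCycle_iUnion [PartialOrder Q] (hφ : Monotone φ)
    (hfiber : ∀ q, ∀ p ∈ M q, φ p.1 = q ∧ φ p.2 = q) (hcycle : HasCycle (⋃ q, M q)) :
    ∃ q, HasCycle (M q) := by
  obtain ⟨m, a, b, hinj, hmem, hcov⟩ := hcycle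
  choose f hf using fun i => Set.mem_iUnion.mp (hmem i)
  have hφa : ∀ i, φ (a i) = f i := fun i => (hfiber (f i) _ (hf i)).1
  have hφb : ∀ i, φ (b i) = f i := fun i => (hfiber (f i) _ (hf i)).2
  have hφa_const : ∀ i, φ (a i) = φ (a 0) :=
    Fin.apply_eq_apply_zero_of_apply_add_one_le fun i =>
      (hφ (hcov i).1.le).trans_eq ((hφb i).trans (hφa i).symm)
  refine ⟨φ (a 0), m, a, b, hinj, fun i => ?_, hcov⟩
  rw [← hφa_const i, hφa i]
  exact hf i

end Fibers

/-- Cluster Lemma: If `φ : P → Q` is order-preserving and each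
fiber `φ⁻¹(q)` carries an acyclic matching `M q` (whose pairs lie in the fiber,
with covering relations those of `P`), then `⋃ q, M q` is an acyclic matching
on `P`. -/
theorem cluster_lemma {P Q : Type*} [PartialOrder P] [PartialOrder Q]
    (φ : P → Q) (hφ : Monotone φ)
    (M : Q → Set (P × P))
    (hfiber : ∀ q, ∀ p ∈ M q, φ p.1 = q ∧ φ p.2 = q)
    (hmatch : ∀ q, IsMatching (M q))
    (hacyclic : ∀ q, ¬ HasCycle (M q)) :
    IsMatching (⋃ q, M q) ∧ ¬ HasCycle (⋃ q, M q) :=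
  ⟨isMatching_iUnion_of_mem_fiber hfiber hmatch, fun hcycle =>
    let ⟨q, hq⟩ := exists_hasCycle_of_hasCycle_iUnion hφ hfiber hcycle
    hacyclic q hq⟩
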